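/- Let X be an integral separated scheme and f : X → X a dominant endomorphism such that f^m = f^n for some natural numbers m < n. Then f is an automorphism of X, and in fact f^(n-m) is the identity morphism of X. -/

import Mathlib

/-! Two morphisms from a reduced scheme to a separated one that agree after precomposition with a
dominant morphism are equal. Since `f ^ m` is dominant and `f ^ m ≫ f ^ (n - m) = f ^ n =
f ^ m = f ^ m ≫ 𝟙`, this cancels to `f ^ (n - m) = 𝟙`, so `f` is invertible with inverse
`f ^ (n - m - 1)`. -/

open AlgebraicGeometry CategoryTheory

namespace AlgebraicGeometry.Scheme

instance isDominant_end_pow {X : Scheme} (f : End X) [IsDominant (f : X ⟶ X)] (k : ℕ) :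
    IsDominant (f ^ k : X ⟶ X) := by
  induction k with
  | zero => exact inferInstanceAs (IsDominant (𝟙 X))
  | succ k ih => rw [pow_succ, End.mul_def]; infer_instance

lemma end_pow_sub_eq_one_of_pow_eq_pow {X : Scheme} [IsReduced X] [X.IsSeparated] (f : End X)
    [IsDominant (f : X ⟶ X)] {m n : ℕ} (hmn : m ≤ n) (h : f ^ m = f ^ n) : f ^ (n - m) = 1 := by
  refine ext_of_isDominant (f ^ m : X ⟶ X) ?_
  rw [End.one_def, Category.comp_id, ← End.mul_def, ← pow_add, Nat.sub_add_cancel hmn, h]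

end AlgebraicGeometry.Scheme

/-- An integral separated scheme's dominant endomorphism satisfying `f^m = f^n` with `m < n`
is an automorphism, and `f^(n-m)` is the identity. -/
theorem dominant_endo_of_finite_order_isAut
    (X : Scheme) [IsIntegral X] [X.IsSeparated]
    (f : End X) (hdom : Dense (Set.range f.base))
    (m n : ℕ) (hmn : m < n) (h : f ^ m = f ^ n) :
    IsIso (f : X ⟶ X) ∧ f ^ (n - m) = 𝟙 X := by
  have : IsDominant (f : X ⟶ X) := ⟨hdom⟩
  have hpow : f ^ (n - m) = 1 := Scheme.end_pow_sub_eq_one_of_pow_eq_pow f hmn.le h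
  exact ⟨(isUnit_iff_isIso f).mp (.of_pow_eq_one hpow (by omega)), hpow⟩
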